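/- arXiv:2306.12228 — 2 statements merged into one kernel-verified Lean document; each statement's English description precedes it below -/
import Mathlib

section
/- Let N, M, T ≥ 1, r > 0, c₁ > 0, let Ω : {1,…,M} → {1,…,N} be injective, and let V ∈ ℂ^{M×T} and Q ∈ ℂ^{N×N}. Assume that the block matrix [[Q, c₁·P_Ω^Adj(V)],[c₁·(P_Ω^Adj(V))ᴴ, I_T]] ∈ ℂ^{(N+T)×(N+T)} is positive semidefinite and that the diagonal sums of Q satisfy d_0(Q) = 1 and d_q(Q) = 0 for all q with 1 ≤ |q| ≤ N−1. Then for every θ ∈ (0,π), ‖(P_Ω^Adj(V))ᴴ·a_r(θ)‖₂ ≤ 1/(c₁·√N). -/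
open Matrix Complex
open scoped ComplexOrder

/-- The Euclidean (`ℓ2`) norm on `ℂ^T`. -/
noncomputable def l2norm {T : ℕ} (u : Fin T → ℂ) : ℝ :=
  Real.sqrt (∑ t, ‖u t‖ ^ 2)

/-- The steering vector `a_r(θ) ∈ ℂ^N`, `(a_r(θ))_l = (1/√N)·exp(−2πi·r·(l−1)·cos θ)`
(0-indexed: `l` runs over `0, …, N-1`). -/
noncomputable def steer (N : ℕ) (r θ : ℝ) : Fin N → ℂ :=
  fun l => (1 / (Real.sqrt N : ℂ)) *
    Complex.exp (-(2 * (Real.pi : ℂ) * Complex.I * (r : ℂ) * ((l : ℕ) : ℂ) * (Real.cos θ : ℂ)))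

/-- The adjoint row-embedding operator `P_Ω^Adj`: the `Ω i`-th row of the result is the `i`-th
row of `V`, and all other rows vanish. -/
noncomputable def PAdj {N M T : ℕ} (Ω : Fin M → Fin N) (V : Matrix (Fin M) (Fin T) ℂ) :
    Matrix (Fin N) (Fin T) ℂ :=
  fun n t => ∑ i : Fin M, if Ω i = n then V i t else 0

/-- The `q`-th diagonal sum `d_q(Q) := ∑_{m - l = q} Q_{l,m}`. -/
noncomputable def diagSum {N : ℕ} (Q : Matrix (Fin N) (Fin N) ℂ) (q : ℤ) : ℂ :=
  ∑ l : Fin N, ∑ m : Fin N, if (m.val : ℤ) - (l.val : ℤ) = q then Q l m else 0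

/-!
Test the positive semidefinite block matrix against `a = a_r(θ)`: its Schur complement
`Q - C Cᴴ` (with `C = c₁ • P_Ω^Adj V`) is positive semidefinite, so `‖Cᴴ a‖² ≤ aᴴ Q a`.
Since `conj (a l) * a m = N⁻¹ e^{-iφ(m - l)}` depends only on `m - l`, the quadratic form
`aᴴ Q a` is `N⁻¹ ∑_q d_q(Q) e^{-iφq}`, which the diagonal-sum constraints collapse to `N⁻¹`.
-/

theorem Matrix.PosSemidef.star_mulVec_dotProduct_le_of_fromBlocks_one
    {m n R : Type*} [Fintype m] [Fintype n] [DecidableEq n]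
    [CommRing R] [PartialOrder R] [StarRing R] [StarOrderedRing R] [NoZeroDivisors R]
    {A : Matrix m m R} {B : Matrix m n R} (h : (fromBlocks A B Bᴴ 1).PosSemidef) (a : m → R) :
    star (Bᴴ *ᵥ a) ⬝ᵥ (Bᴴ *ᵥ a) ≤ star a ⬝ᵥ A *ᵥ a := by
  rw [star_mulVec, conjTranspose_conjTranspose]
  have : Invertible (1 : Matrix n n R) := invertibleOne
  have hSchur := ((PosDef.fromBlocks₂₂ A B (D := 1) PosDef.one).mp h).dotProduct_mulVec_nonneg a
  rwa [inv_one, Matrix.mul_one, sub_mulVec, dotProduct_sub, sub_nonneg, ← mulVec_mulVec,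
    dotProduct_mulVec] at hSchur

theorem ofReal_l2norm_sq {T : ℕ} (u : Fin T → ℂ) : ((l2norm u ^ 2 : ℝ) : ℂ) = star u ⬝ᵥ u := by
  rw [l2norm, Real.sq_sqrt (by positivity)]
  push_cast
  simp [dotProduct, Complex.conj_mul']

theorem l2norm_eq_norm {T : ℕ} (u : Fin T → ℂ) :
    l2norm u = ‖(WithLp.toLp 2 u : EuclideanSpace ℂ (Fin T))‖ := by
  rw [l2norm, EuclideanSpace.norm_eq]

theorem l2norm_smul {T : ℕ} (c : ℝ) (u : Fin T → ℂ) : l2norm (c • u) = |c| * l2norm u := by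
  rw [l2norm_eq_norm, l2norm_eq_norm, WithLp.toLp_smul, norm_smul, Real.norm_eq_abs]

theorem sum_mul_apply_sub_eq_sum_diagSum {N : ℕ} (Q : Matrix (Fin N) (Fin N) ℂ) (g : ℤ → ℂ) :
    ∑ l, ∑ m, Q l m * g ((m : ℤ) - l) = ∑ q ∈ Finset.Ioo (-(N : ℤ)) N, diagSum Q q * g q := by
  simp_rw [diagSum, Finset.sum_mul, ite_mul, zero_mul]
  symm
  rw [Finset.sum_comm]
  refine Finset.sum_congr rfl fun l _ => ?_
  rw [Finset.sum_comm]
  refine Finset.sum_congr rfl fun m _ => ?_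
  rw [Finset.sum_ite_eq, if_pos (by simp only [Finset.mem_Ioo]; omega)]

theorem sum_mul_apply_sub_eq_of_diagSum {N : ℕ} (hN : 1 ≤ N) {Q : Matrix (Fin N) (Fin N) ℂ}
    (hd0 : diagSum Q 0 = 1)
    (hdq : ∀ q : ℤ, 1 ≤ |q| → |q| ≤ (N : ℤ) - 1 → diagSum Q q = 0) (g : ℤ → ℂ) :
    ∑ l, ∑ m, Q l m * g ((m : ℤ) - l) = g 0 := by
  rw [sum_mul_apply_sub_eq_sum_diagSum,
    Finset.sum_eq_single_of_mem 0 (by simp only [Finset.mem_Ioo]; omega), hd0, one_mul]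
  intro q hq hq0
  rw [Finset.mem_Ioo] at hq
  rw [hdq q (Int.one_le_abs hq0) (by rw [abs_le]; omega), zero_mul]

theorem star_steer_mul_steer (N : ℕ) (r θ : ℝ) (l m : Fin N) :
    star (steer N r θ l) * steer N r θ m =
      (N : ℂ)⁻¹ * exp (-(2 * Real.pi * I * r * Real.cos θ) * (((m : ℤ) - l : ℤ) : ℂ)) := by
  have hconj : star (steer N r θ l) =
      (Real.sqrt N : ℂ)⁻¹ * exp (2 * Real.pi * I * r * (l : ℕ) * Real.cos θ) := by
    simp only [steer, star_mul', map_inv₀, Complex.star_def, ← Complex.exp_conj,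
      conj_ofReal, map_neg, map_mul, conj_I, map_ofNat, conj_natCast, one_div]
    ring_nf
  have hN : ((Real.sqrt N : ℂ)⁻¹) * (Real.sqrt N : ℂ)⁻¹ = (N : ℂ)⁻¹ := by
    rw [← mul_inv, ← ofReal_mul, Real.mul_self_sqrt (Nat.cast_nonneg N), ofReal_natCast]
  rw [hconj, steer, one_div, ← hN, mul_mul_mul_comm, ← exp_add]
  push_cast
  ring_nf

theorem star_steer_dotProduct_mulVec_steer {N : ℕ} (hN : 1 ≤ N) (r θ : ℝ)
    {Q : Matrix (Fin N) (Fin N) ℂ} (hd0 : diagSum Q 0 = 1)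
    (hdq : ∀ q : ℤ, 1 ≤ |q| → |q| ≤ (N : ℤ) - 1 → diagSum Q q = 0) :
    star (steer N r θ) ⬝ᵥ Q *ᵥ steer N r θ = (N : ℂ)⁻¹ := by
  calc star (steer N r θ) ⬝ᵥ Q *ᵥ steer N r θ
      = ∑ l, ∑ m, Q l m * ((N : ℂ)⁻¹ *
          exp (-(2 * Real.pi * I * r * Real.cos θ) * (((m : ℤ) - l : ℤ) : ℂ))) := by
        simp only [dotProduct, mulVec, Finset.mul_sum, Pi.star_apply]
        refine Finset.sum_congr rfl fun l _ => Finset.sum_congr rfl fun m _ => ?_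
        rw [← star_steer_mul_steer]
        ring
    _ = (N : ℂ)⁻¹ := by
        refine (sum_mul_apply_sub_eq_of_diagSum hN hd0 hdq fun q : ℤ ↦
          (N : ℂ)⁻¹ * exp (-(2 * Real.pi * I * r * Real.cos θ) * q)).trans ?_
        simp

theorem stmt6_general {N M T : ℕ} (hN : 1 ≤ N)
    (r c₁ : ℝ) (hc₁ : 0 < c₁)
    (Ω : Fin M → Fin N)
    (V : Matrix (Fin M) (Fin T) ℂ) (Q : Matrix (Fin N) (Fin N) ℂ)
    (hpsd : (Matrix.fromBlocks Q (c₁ • PAdj Ω V) (c₁ • PAdj Ω V)ᴴ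
      (1 : Matrix (Fin T) (Fin T) ℂ)).PosSemidef)
    (hd0 : diagSum Q 0 = 1)
    (hdq : ∀ q : ℤ, 1 ≤ |q| → |q| ≤ (N : ℤ) - 1 → diagSum Q q = 0) :
    ∀ θ ∈ Set.Ioo (0 : ℝ) Real.pi,
      l2norm ((PAdj Ω V)ᴴ.mulVec (steer N r θ)) ≤ 1 / (c₁ * Real.sqrt N) := by
  intro θ _
  have hbound := hpsd.star_mulVec_dotProduct_le_of_fromBlocks_one (steer N r θ)
  rw [star_steer_dotProduct_mulVec_steer hN r θ hd0 hdq, conjTranspose_smul, star_trivial c₁,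
    smul_mulVec, ← ofReal_l2norm_sq, l2norm_smul, abs_of_pos hc₁, ← ofReal_natCast, ← ofReal_inv,
    real_le_real] at hbound
  rw [one_div, mul_inv, ← Real.sqrt_inv, le_inv_mul_iff₀ hc₁]
  exact Real.le_sqrt_of_sq_le hbound

theorem stmt6 {N M T : ℕ} (hN : 1 ≤ N) (hM : 1 ≤ M) (hT : 1 ≤ T)
    (r c₁ : ℝ) (hr : 0 < r) (hc₁ : 0 < c₁)
    (Ω : Fin M → Fin N) (hΩ : Function.Injective Ω)
    (V : Matrix (Fin M) (Fin T) ℂ) (Q : Matrix (Fin N) (Fin N) ℂ)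
    (hpsd : (Matrix.fromBlocks Q (c₁ • PAdj Ω V) (c₁ • PAdj Ω V)ᴴ
      (1 : Matrix (Fin T) (Fin T) ℂ)).PosSemidef)
    (hd0 : diagSum Q 0 = 1)
    (hdq : ∀ q : ℤ, 1 ≤ |q| → |q| ≤ (N : ℤ) - 1 → diagSum Q q = 0) :
    ∀ θ ∈ Set.Ioo (0 : ℝ) Real.pi,
      l2norm ((PAdj Ω V)ᴴ.mulVec (steer N r θ)) ≤ 1 / (c₁ * Real.sqrt N) :=
  stmt6_general hN r c₁ hc₁ Ω V Q hpsd hd0 hdq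
end

section
/- Let N, T ≥ 1, r > 0, C_e > 0 and W ∈ ℂ^{N×T}. Then the dual atomic norm of W admits the closed form: sup_{A ∈ 𝒜} Re⟨W, A⟩_F = C_e · sup_{θ ∈ (0,π)} ‖Wᴴ·a_r(θ)‖₂. -/
/-!
Pairing `W` with an atom `a φᴴ E` gives `⟪E Wᴴ a, φ⟫`, whose real part is at most
`C_e ‖Wᴴ a‖₂` by Cauchy–Schwarz and the operator-norm bound on `E`; the atom with `E = C_e • 1`
and `φ` the unit vector along `Wᴴ a` attains this value. So each set of values is dominated by
the other, and the two suprema agree with no boundedness argument (`sSup` of an unbounded set of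
reals is junk on both sides alike).
-/

open Matrix Complex

/-- The Frobenius inner product `⟨A, B⟩_F := trace (Bᴴ * A)`. -/
noncomputable def frobInner {N T : ℕ} (A B : Matrix (Fin N) (Fin T) ℂ) : ℂ :=
  (Bᴴ * A).trace

/-- `‖E‖_{2→2} ≤ C`: the `ℓ2 → ℓ2` operator norm of `E` is at most `C`. -/
def opNormLe {T : ℕ} (E : Matrix (Fin T) (Fin T) ℂ) (C : ℝ) : Prop :=
  ∀ x : Fin T → ℂ, l2norm (E.mulVec x) ≤ C * l2norm x

/-- The atomic set `𝒜 := { a_r(θ)·φᴴ·E : θ ∈ (0,π), ‖φ‖₂ = 1, ‖E‖_{2→2} ≤ C_e }`. -/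
noncomputable def atomicSet (N T : ℕ) (r Ce : ℝ) : Set (Matrix (Fin N) (Fin T) ℂ) :=
  { A | ∃ (θ : ℝ) (φ : Fin T → ℂ) (E : Matrix (Fin T) (Fin T) ℂ),
      θ ∈ Set.Ioo (0 : ℝ) Real.pi ∧ l2norm φ = 1 ∧ opNormLe E Ce ∧
      A = Matrix.vecMulVec (steer N r θ) (star φ) * E }

lemma l2norm_eq_norm_toLp {T : ℕ} (u : Fin T → ℂ) : l2norm u = ‖WithLp.toLp 2 u‖ :=
  (EuclideanSpace.norm_eq _).symm

lemma re_dotProduct_star_le_l2norm_mul {T : ℕ} (φ v : Fin T → ℂ) :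
    (φ ⬝ᵥ star v).re ≤ l2norm φ * l2norm v := by
  rw [l2norm_eq_norm_toLp, l2norm_eq_norm_toLp, mul_comm, ← EuclideanSpace.inner_toLp_toLp]
  exact re_inner_le_norm (𝕜 := ℂ) (WithLp.toLp 2 v) (WithLp.toLp 2 φ)

lemma opNormLe_smul_one {T : ℕ} {C : ℝ} (hC : 0 ≤ C) :
    opNormLe ((C : ℂ) • (1 : Matrix (Fin T) (Fin T) ℂ)) C := by
  intro x
  rw [smul_mulVec, one_mulVec, l2norm_eq_norm_toLp, l2norm_eq_norm_toLp, WithLp.toLp_smul,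
    norm_smul, norm_real, Real.norm_of_nonneg hC]

lemma exists_norm_eq_one_inner_eq_norm {𝕜 E : Type*} [RCLike 𝕜] [NormedAddCommGroup E]
    [InnerProductSpace 𝕜 E] [Nontrivial E] (u : E) :
    ∃ φ : E, ‖φ‖ = 1 ∧ inner 𝕜 u φ = (‖u‖ : 𝕜) := by
  by_cases hu : u = 0
  · obtain ⟨x, hx⟩ := exists_ne (0 : E)
    exact ⟨_, norm_smul_inv_norm (𝕜 := 𝕜) hx, by simp [hu]⟩
  · refine ⟨_, norm_smul_inv_norm (𝕜 := 𝕜) hu, ?_⟩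
    have : (‖u‖ : 𝕜) ≠ 0 := by simpa using hu
    rw [inner_smul_right, inner_self_eq_norm_sq_to_K]
    field_simp

lemma frobInner_vecMulVec_mul {N T : ℕ} (W : Matrix (Fin N) (Fin T) ℂ) (a : Fin N → ℂ)
    (φ : Fin T → ℂ) (E : Matrix (Fin T) (Fin T) ℂ) :
    frobInner W (vecMulVec a (star φ) * E) = φ ⬝ᵥ star (E *ᵥ Wᴴ *ᵥ a) := by
  rw [frobInner, conjTranspose_mul, conjTranspose_vecMulVec, star_star, Matrix.mul_assoc,
    trace_mul_comm, vecMulVec_mul, vecMulVec_mul, trace_vecMulVec, star_mulVec, star_mulVec,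
    conjTranspose_conjTranspose]

lemma re_frobInner_vecMulVec_mul_le {N T : ℕ} {C : ℝ} (W : Matrix (Fin N) (Fin T) ℂ)
    (a : Fin N → ℂ) {φ : Fin T → ℂ} (hφ : l2norm φ = 1) {E : Matrix (Fin T) (Fin T) ℂ}
    (hE : opNormLe E C) :
    (frobInner W (vecMulVec a (star φ) * E)).re ≤ C * l2norm (Wᴴ *ᵥ a) := by
  rw [frobInner_vecMulVec_mul]
  calc (φ ⬝ᵥ star (E *ᵥ Wᴴ *ᵥ a)).re ≤ l2norm φ * l2norm (E *ᵥ Wᴴ *ᵥ a) :=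
        re_dotProduct_star_le_l2norm_mul _ _
    _ ≤ C * l2norm (Wᴴ *ᵥ a) := by rw [hφ, one_mul]; exact hE _

lemma exists_frobInner_vecMulVec_mul_smul_one_eq {N T : ℕ} [NeZero T] (C : ℝ)
    (W : Matrix (Fin N) (Fin T) ℂ) (a : Fin N → ℂ) :
    ∃ φ : Fin T → ℂ, l2norm φ = 1 ∧
      (frobInner W (vecMulVec a (star φ) * ((C : ℂ) • (1 : Matrix (Fin T) (Fin T) ℂ)))).re = C * l2norm (Wᴴ *ᵥ a) := by
  obtain ⟨φ, hφ, hinner⟩ :=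
    exists_norm_eq_one_inner_eq_norm (𝕜 := ℂ) (WithLp.toLp 2 (Wᴴ *ᵥ a))
  refine ⟨φ.ofLp, by rw [l2norm_eq_norm_toLp, WithLp.toLp_ofLp, hφ], ?_⟩
  rw [EuclideanSpace.inner_eq_star_dotProduct, WithLp.ofLp_toLp] at hinner
  rw [frobInner_vecMulVec_mul, smul_mulVec, one_mulVec, star_smul, dotProduct_smul, hinner,
    l2norm_eq_norm_toLp]
  simp

theorem stmt12_general {N T : ℕ} (hT : 1 ≤ T)
    (r Ce : ℝ) (hCe : 0 < Ce)
    (W : Matrix (Fin N) (Fin T) ℂ) :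
    sSup ((fun A => (frobInner W A).re) '' atomicSet N T r Ce) =
      Ce * sSup ((fun θ => l2norm (Wᴴ.mulVec (steer N r θ))) '' Set.Ioo (0 : ℝ) Real.pi) := by
  have : NeZero T := ⟨by omega⟩
  rw [← smul_eq_mul, ← Real.sSup_smul_of_nonneg hCe.le, ← Set.image_smul, Set.image_image]
  apply csSup_eq_csSup_of_forall_exists_le
  · rintro _ ⟨_, ⟨θ, φ, E, hθ, hφ, hE, rfl⟩, rfl⟩
    exact ⟨_, ⟨θ, hθ, rfl⟩, re_frobInner_vecMulVec_mul_le W _ hφ hE⟩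
  · rintro _ ⟨θ, hθ, rfl⟩
    obtain ⟨φ, hφ, hval⟩ := exists_frobInner_vecMulVec_mul_smul_one_eq Ce W (steer N r θ)
    exact ⟨_, ⟨_, ⟨θ, φ, _, hθ, hφ, opNormLe_smul_one hCe.le, rfl⟩, rfl⟩, hval.ge⟩

theorem stmt12 {N T : ℕ} (hN : 1 ≤ N) (hT : 1 ≤ T)
    (r Ce : ℝ) (hr : 0 < r) (hCe : 0 < Ce)
    (W : Matrix (Fin N) (Fin T) ℂ) :
    sSup ((fun A => (frobInner W A).re) '' atomicSet N T r Ce) =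
      Ce * sSup ((fun θ => l2norm (Wᴴ.mulVec (steer N r θ))) '' Set.Ioo (0 : ℝ) Real.pi) :=
  stmt12_general hT r Ce hCe W
end
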